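/- Let x, y, z, t ∈ ℂ with |yt| < 1. Then the series ∑_{n=0}^∞ F_n(x,y,z;q) (−1)^n q^{C(n,2)} t^n/(q;q)_n converges absolutely and its sum equals (xt;q)_∞ (zt;q)_∞ / (yt;q)_∞. -/

import Mathlib

noncomputable section

/-- The q-shifted factorial `(a;q)_n`. -/
def qPoch (q a : ℂ) (n : ℕ) : ℂ := ∏ j ∈ Finset.range n, (1 - a * q ^ j)

/-- The infinite q-shifted factorial `(a;q)_∞`. -/
def qPochInf (q a : ℂ) : ℂ := ∏' j : ℕ, (1 - a * q ^ j)

/-- The q-binomial coefficient `[n k]_q`. -/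
def qBinom (q : ℂ) (n k : ℕ) : ℂ := qPoch q q n / (qPoch q q k * qPoch q q (n - k))

/-- The Cauchy polynomials `p_n(x,y)`. -/
def cauchyP (q x y : ℂ) (n : ℕ) : ℂ := ∏ j ∈ Finset.range n, (x - q ^ j * y)

/-- The generalized q-binomial coefficient `[α k]_{-q}`. -/
def genQBinom (q α : ℂ) (k : ℕ) : ℂ :=
  qPoch q (-(q ^ (-α))) k / qPoch q (-q) k * q ^ (α * (k : ℂ) - (k.choose 2 : ℂ))

/-- The generalized q-polynomials `L̃_n^{(r,s)}(α,x,y,z,a)`. -/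
def Ltil (q : ℂ) (r s : ℤ) (α x y z a : ℂ) (n : ℕ) : ℂ :=
  ∑ k ∈ Finset.range (n + 1),
    qBinom q n k * genQBinom q α k *
      q ^ (r * (k.choose 2 : ℤ) - s * ((k + 1).choose 2 : ℤ) + (k.choose 2 : ℤ)) *
      qPoch q a k * cauchyP q x y (n - k) * z ^ k

/-- The basic hypergeometric series `₂Φ₁[a,b;c;q;z]`. -/
def Phi21 (q a b c z : ℂ) : ℂ :=
  ∑' n : ℕ, qPoch q a n * qPoch q b n / (qPoch q c n * qPoch q q n) * z ^ n

/-- The basic hypergeometric series `₄Φ₃`. -/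
def Phi43 (q a₁ a₂ a₃ a₄ b₁ b₂ b₃ z : ℂ) : ℂ :=
  ∑' n : ℕ, qPoch q a₁ n * qPoch q a₂ n * qPoch q a₃ n * qPoch q a₄ n /
    (qPoch q b₁ n * qPoch q b₂ n * qPoch q b₃ n * qPoch q q n) * z ^ n

/-- The trivariate q-polynomials `F_n(x,y,z;q)`. -/
def Ftri (q x y z : ℂ) (n : ℕ) : ℂ :=
  (-1) ^ n * q ^ (-(n.choose 2 : ℤ)) *
    ∑ k ∈ Finset.range (n + 1),
      qBinom q n k * q ^ (k.choose 2) * (-z) ^ k * cauchyP q y x (n - k)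

/-- The Hahn (Al-Salam–Carlitz) polynomials `φ_n^{(σ)}(x|q)`. -/
def hahnPhi (q σ x : ℂ) (n : ℕ) : ℂ :=
  ∑ k ∈ Finset.range (n + 1), qBinom q n k * qPoch q σ k * x ^ k

/-- The q-derivative operator `D_a`. -/
def Dq (q : ℂ) (f : ℂ → ℂ) : ℂ → ℂ := fun a => (f a - f (q * a)) / a

/-- The homogeneous q-difference operator `D_{xy}`. -/
def Dxy (q : ℂ) (f : ℂ → ℂ → ℂ) : ℂ → ℂ → ℂ :=
  fun x y => (f x (y / q) - f (q * x) y) / (x - y / q)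


/-! Since `p_k(0,z) = (-z)^k q^C(k,2)`, the `n`-th summand is the Cauchy product coefficient
`∑ₖ a_k(z,0) a_{n-k}(x,y)` of the series with terms `a_m(x,y) = p_m(y,x) t^m / (q;q)_m`.
Each factor is summed by the homogeneous q-binomial theorem `∑ a_m(x,y) = (xt;q)_∞ / (yt;q)_∞`:
the sum `S(t)` satisfies `(1 - yt) S(t) = (1 - xt) S(qt)`, so `S(t) (yt;q)_N = S(q^N t) (xt;q)_N`,
and `S(q^N t) → 1` by dominated convergence. Absolute convergence is the ratio test, the ratio
of consecutive terms tending to `yt`. -/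

open Filter Finset Topology

def cauchyTerm (q x y t : ℂ) (m : ℕ) : ℂ := cauchyP q y x m * t ^ m / qPoch q q m

section QBinomial

variable {q : ℂ}

lemma qPoch_succ (a : ℂ) (n : ℕ) : qPoch q a (n + 1) = qPoch q a n * (1 - a * q ^ n) :=
  prod_range_succ _ _

lemma cauchyP_succ (x y : ℂ) (n : ℕ) :
    cauchyP q x y (n + 1) = cauchyP q x y n * (x - q ^ n * y) :=
  prod_range_succ _ _

lemma cauchyP_zero_left (z : ℂ) (k : ℕ) : cauchyP q 0 z k = (-z) ^ k * q ^ k.choose 2 := by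
  induction k with
  | zero => simp [cauchyP]
  | succ k ih =>
    rw [cauchyP_succ, ih, Nat.choose_succ_succ, Nat.choose_one_right, pow_add]
    ring

lemma one_sub_ne_zero_of_norm_lt_one {u : ℂ} (hu : ‖u‖ < 1) : 1 - u ≠ 0 := by
  rw [sub_ne_zero]
  rintro rfl
  simp at hu

lemma norm_mul_pow_lt_one (hq1 : ‖q‖ < 1) {a : ℂ} (ha : ‖a‖ < 1) (n : ℕ) : ‖a * q ^ n‖ < 1 := by
  rw [norm_mul, norm_pow]
  exact mul_lt_one_of_nonneg_of_lt_one_left (norm_nonneg a) ha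
    (pow_le_one₀ (norm_nonneg q) hq1.le)

lemma norm_mul_pow_mul_lt_one (hq1 : ‖q‖ < 1) {y t : ℂ} (hyt : ‖y * t‖ < 1) (n : ℕ) :
    ‖y * (q ^ n * t)‖ < 1 := by
  rw [mul_left_comm, mul_comm]
  exact norm_mul_pow_lt_one hq1 hyt n

lemma qPoch_self_ne_zero (hq1 : ‖q‖ < 1) (n : ℕ) : qPoch q q n ≠ 0 :=
  prod_ne_zero_iff.2 fun _ _ => one_sub_ne_zero_of_norm_lt_one (norm_mul_pow_lt_one hq1 hq1 _)

lemma summable_neg_mul_pow (hq1 : ‖q‖ < 1) (a : ℂ) : Summable fun n : ℕ => -(a * q ^ n) :=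
  ((summable_geometric_of_norm_lt_one hq1).mul_left a).neg

lemma hasProd_qPochInf (hq1 : ‖q‖ < 1) (a : ℂ) :
    HasProd (fun n : ℕ => 1 - a * q ^ n) (qPochInf q a) := by
  simp_rw [sub_eq_add_neg]
  exact (Complex.multipliable_one_add_of_summable (summable_neg_mul_pow hq1 a)).hasProd

lemma tendsto_qPoch (hq1 : ‖q‖ < 1) (a : ℂ) :
    Tendsto (qPoch q a) atTop (𝓝 (qPochInf q a)) :=
  (hasProd_qPochInf hq1 a).tendsto_prod_nat

lemma qPochInf_zero : qPochInf q 0 = 1 := by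
  simp [qPochInf]

lemma qPochInf_ne_zero (hq1 : ‖q‖ < 1) {a : ℂ} (ha : ‖a‖ < 1) : qPochInf q a ≠ 0 := by
  have hlog := Complex.summable_log_one_add_of_summable (summable_neg_mul_pow hq1 a)
  simp_rw [← sub_eq_add_neg] at hlog
  rw [qPochInf, ← Complex.cexp_tsum_eq_tprod
    (fun n => one_sub_ne_zero_of_norm_lt_one (norm_mul_pow_lt_one hq1 ha n)) hlog]
  exact Complex.exp_ne_zero _

lemma cauchyTerm_zero (x y t : ℂ) : cauchyTerm q x y t 0 = 1 := by
  simp [cauchyTerm, cauchyP, qPoch]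

lemma cauchyTerm_succ (hq1 : ‖q‖ < 1) (x y t : ℂ) (m : ℕ) :
    cauchyTerm q x y t (m + 1) =
      cauchyTerm q x y t m * ((y - q ^ m * x) * t / (1 - q ^ (m + 1))) := by
  have hm := qPoch_self_ne_zero hq1 m
  have hm' := one_sub_ne_zero_of_norm_lt_one (norm_mul_pow_lt_one hq1 hq1 m)
  rw [pow_succ' q m]
  simp only [cauchyTerm, cauchyP_succ, qPoch_succ]
  field_simp
  ring

lemma cauchyTerm_mul (x y c t : ℂ) (m : ℕ) :
    cauchyTerm q x y (c * t) m = c ^ m * cauchyTerm q x y t m := by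
  simp only [cauchyTerm, mul_pow]
  ring

lemma summable_norm_cauchyTerm (hq1 : ‖q‖ < 1) (x : ℂ) {y t : ℂ} (hyt : ‖y * t‖ < 1) :
    Summable fun m => ‖cauchyTerm q x y t m‖ := by
  obtain ⟨r, hyr, hr1⟩ := exists_between hyt
  have hpow : Tendsto (fun m : ℕ => q ^ m) atTop (𝓝 0) :=
    tendsto_pow_atTop_nhds_zero_of_norm_lt_one hq1
  have hratio : Tendsto (fun m : ℕ => (y - q ^ m * x) * t / (1 - q ^ (m + 1))) atTop
      (𝓝 (y * t)) := by
    simpa [Pi.div_def] using (((hpow.mul_const x).const_sub y).mul_const t).div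
      ((hpow.comp (tendsto_add_atTop_nat 1)).const_sub 1) (by simp)
  refine summable_of_ratio_norm_eventually_le hr1 ?_
  filter_upwards [hratio.norm.eventually (gt_mem_nhds hyr)] with m hm
  rw [norm_norm, norm_norm, cauchyTerm_succ hq1, norm_mul, mul_comm r]
  exact mul_le_mul_of_nonneg_left hm.le (norm_nonneg _)

lemma one_sub_mul_tsum_cauchyTerm (hq1 : ‖q‖ < 1) (x : ℂ) {y t : ℂ} (hyt : ‖y * t‖ < 1) :
    (1 - y * t) * ∑' m, cauchyTerm q x y t m =
      (1 - x * t) * ∑' m, cauchyTerm q x y (q * t) m := by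
  set u := cauchyTerm q x y t
  set w := cauchyTerm q x y (q * t)
  have hu : Summable u := (summable_norm_cauchyTerm hq1 x hyt).of_norm
  have hw : Summable w := by
    simpa using (summable_norm_cauchyTerm hq1 x (norm_mul_pow_mul_lt_one hq1 hyt 1)).of_norm
  have hstep (m : ℕ) : u (m + 1) - w (m + 1) = y * t * u m - x * t * w m := by
    have hm := one_sub_ne_zero_of_norm_lt_one (norm_mul_pow_lt_one hq1 hq1 m)
    rw [← pow_succ'] at hm
    simp only [u, w, cauchyTerm_mul, cauchyTerm_succ hq1]
    field_simp
    ring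
  have hsum : ∑' m, (u m - w m) = y * t * ∑' m, u m - x * t * ∑' m, w m := by
    rw [(hu.sub hw).tsum_eq_zero_add, show u 0 - w 0 = 0 by simp [u, w, cauchyTerm_zero],
      zero_add, tsum_congr hstep, (hu.mul_left _).tsum_sub (hw.mul_left _), tsum_mul_left,
      tsum_mul_left]
  linear_combination (hu.tsum_sub hw).symm.trans hsum

lemma tsum_cauchyTerm_mul_qPoch (hq1 : ‖q‖ < 1) (x : ℂ) {y t : ℂ} (hyt : ‖y * t‖ < 1) (N : ℕ) :
    (∑' m, cauchyTerm q x y t m) * qPoch q (y * t) N =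
      (∑' m, cauchyTerm q x y (q ^ N * t) m) * qPoch q (x * t) N := by
  induction N with
  | zero => simp [qPoch]
  | succ N ih =>
    have hstep : (1 - y * (q ^ N * t)) * ∑' m, cauchyTerm q x y (q ^ N * t) m =
        (1 - x * (q ^ N * t)) * ∑' m, cauchyTerm q x y (q ^ (N + 1) * t) m := by
      rw [pow_succ', mul_assoc]
      exact one_sub_mul_tsum_cauchyTerm hq1 x (norm_mul_pow_mul_lt_one hq1 hyt N)
    rw [qPoch_succ, qPoch_succ]
    linear_combination (1 - y * t * q ^ N) * ih + qPoch q (x * t) N * hstep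

lemma tendsto_tsum_cauchyTerm_pow_mul (hq1 : ‖q‖ < 1) (x : ℂ) {y t : ℂ} (hyt : ‖y * t‖ < 1) :
    Tendsto (fun N : ℕ => ∑' m, cauchyTerm q x y (q ^ N * t) m) atTop (𝓝 1) := by
  have hlim (m : ℕ) : Tendsto (fun N : ℕ => cauchyTerm q x y (q ^ N * t) m) atTop
      (𝓝 (if m = 0 then 1 else 0)) := by
    simp_rw [cauchyTerm_mul, ← pow_mul, mul_comm _ m, pow_mul]
    rcases m with _ | m
    · simp [cauchyTerm_zero]
    · have hqm : ‖q ^ (m + 1)‖ < 1 := by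
        rw [norm_pow]
        exact pow_lt_one₀ (norm_nonneg q) hq1 m.succ_ne_zero
      simpa using (tendsto_pow_atTop_nhds_zero_of_norm_lt_one hqm).mul_const
        (cauchyTerm q x y t (m + 1))
  have hbound : ∀ᶠ N in atTop, ∀ m, ‖cauchyTerm q x y (q ^ N * t) m‖ ≤ ‖cauchyTerm q x y t m‖ :=
    Eventually.of_forall fun N m => by
      rw [cauchyTerm_mul, norm_mul, norm_pow, norm_pow]
      exact mul_le_of_le_one_left (norm_nonneg _)
        (pow_le_one₀ (by positivity) (pow_le_one₀ (norm_nonneg q) hq1.le))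
  simpa only [tsum_ite_eq] using
    tendsto_tsum_of_dominated_convergence (summable_norm_cauchyTerm hq1 x hyt) hlim hbound

lemma tsum_cauchyTerm_mul_qPochInf (hq1 : ‖q‖ < 1) (x : ℂ) {y t : ℂ} (hyt : ‖y * t‖ < 1) :
    (∑' m, cauchyTerm q x y t m) * qPochInf q (y * t) = qPochInf q (x * t) := by
  have hlim := (tendsto_tsum_cauchyTerm_pow_mul hq1 x hyt).mul (tendsto_qPoch hq1 (x * t))
  rw [one_mul] at hlim
  refine tendsto_nhds_unique ?_ hlim
  simp_rw [← tsum_cauchyTerm_mul_qPoch hq1 x hyt]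
  exact (tendsto_qPoch hq1 (y * t)).const_mul _

/-- The q-binomial theorem in Cauchy's homogeneous form. -/
theorem hasSum_cauchyTerm (hq1 : ‖q‖ < 1) (x : ℂ) {y t : ℂ} (hyt : ‖y * t‖ < 1) :
    HasSum (cauchyTerm q x y t) (qPochInf q (x * t) / qPochInf q (y * t)) := by
  rw [← tsum_cauchyTerm_mul_qPochInf hq1 x hyt, mul_div_cancel_right₀ _ (qPochInf_ne_zero hq1 hyt)]
  exact (summable_norm_cauchyTerm hq1 x hyt).of_norm.hasSum

end QBinomial

lemma Ftri_term_eq_sum_cauchyTerm {q : ℂ} (hq0 : q ≠ 0) (hq1 : ‖q‖ < 1) (x y z t : ℂ) (n : ℕ) :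
    Ftri q x y z n * (-1) ^ n * q ^ n.choose 2 * t ^ n / qPoch q q n =
      ∑ k ∈ range (n + 1), cauchyTerm q z 0 t k * cauchyTerm q x y t (n - k) := by
  have hunit : (-1) ^ n * q ^ (-(n.choose 2 : ℤ)) * ((-1) ^ n * q ^ n.choose 2) = 1 := by
    rw [mul_mul_mul_comm, ← mul_pow, zpow_neg, zpow_natCast, inv_mul_cancel₀ (pow_ne_zero _ hq0)]
    norm_num
  have hcancel (S : ℂ) :
      (-1) ^ n * q ^ (-(n.choose 2 : ℤ)) * S * (-1) ^ n * q ^ n.choose 2 = S := by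
    linear_combination S * hunit
  rw [Ftri, hcancel, sum_mul, sum_div]
  refine sum_congr rfl fun k hk => ?_
  have hkn : k ≤ n := Nat.lt_succ_iff.mp (mem_range.mp hk)
  have htn : t ^ n = t ^ k * t ^ (n - k) := by rw [← pow_add, Nat.add_sub_cancel' hkn]
  have hn := qPoch_self_ne_zero hq1 n
  have hk := qPoch_self_ne_zero hq1 k
  have hnk := qPoch_self_ne_zero hq1 (n - k)
  rw [cauchyTerm, cauchyTerm, cauchyP_zero_left, qBinom, htn]
  field_simp

/-- Generating function for the trivariate q-polynomials. -/
theorem stmt3 (q : ℂ) (hq0 : q ≠ 0) (hq1 : ‖q‖ < 1) (x y z t : ℂ) (hyt : ‖y * t‖ < 1) :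
    Summable (fun n : ℕ =>
        ‖Ftri q x y z n * (-1) ^ n * q ^ (n.choose 2) * t ^ n / qPoch q q n‖) ∧
    ∑' n : ℕ, Ftri q x y z n * (-1) ^ n * q ^ (n.choose 2) * t ^ n / qPoch q q n =
      qPochInf q (x * t) * qPochInf q (z * t) / qPochInf q (y * t) := by
  have h0t : ‖0 * t‖ < 1 := by simp
  have hxy := summable_norm_cauchyTerm hq1 x hyt
  have hz := summable_norm_cauchyTerm hq1 z h0t
  simp_rw [Ftri_term_eq_sum_cauchyTerm hq0 hq1]
  refine ⟨summable_norm_sum_mul_range_of_summable_norm hz hxy, ?_⟩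
  rw [← tsum_mul_tsum_eq_tsum_sum_range_of_summable_norm hz hxy,
    (hasSum_cauchyTerm hq1 x hyt).tsum_eq, (hasSum_cauchyTerm hq1 z h0t).tsum_eq, zero_mul,
    qPochInf_zero]
  ring
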